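/- Stochastic domination for the random cluster model: for every β ≥ 0 and every function f on subsets of C_2(B_N)^+ that is nondecreasing with respect to set inclusion, E_{Ψ_{tanh 2β}}[f] ≤ E_{φ⁰_{B_N,1−e^{−4β}}}[f] ≤ E_{Ψ_{1−e^{−4β}}}[f]; that is, Ψ_{tanh 2β} ≼ φ⁰_{B_N,1−e^{−4β}} ≼ Ψ_{1−e^{−4β}} in the sense of stochastic domination. -/

import Mathlib

open scoped Classical

namespace LGT

/-- A site (vertex) of the lattice `ℤ^m`. -/
abbrev Site (m : ℕ) := Fin m → ℤ

/-- The `i`-th unit vector. -/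
def unitVec (m : ℕ) (i : Fin m) : Site m := fun j => if j = i then 1 else 0

/-- An oriented nearest-neighbour edge of `ℤ^m`: it joins `base` and `base + e_dir`,
oriented from `base` to `base + e_dir` when `ori = true`, and oppositely otherwise. -/
structure OEdge (m : ℕ) where
  base : Site m
  dir : Fin m
  ori : Bool
deriving DecidableEq

/-- An oriented plaquette of `ℤ^m` (valid when `dir1 < dir2`): the unit square with
corners `base, base + e_dir1, base + e_dir2, base + e_dir1 + e_dir2`, positively
oriented when `ori = true`. -/
structure OPlaq (m : ℕ) where
  base : Site m
  dir1 : Fin m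
  dir2 : Fin m
  ori : Bool
deriving DecidableEq

/-- The same edge with reversed orientation. -/
def OEdge.neg {m : ℕ} (e : OEdge m) : OEdge m := ⟨e.base, e.dir, !e.ori⟩

/-- The same plaquette with reversed orientation. -/
def OPlaq.neg {m : ℕ} (p : OPlaq m) : OPlaq m := ⟨p.base, p.dir1, p.dir2, !p.ori⟩

/-- The source vertex of an oriented edge. -/
def OEdge.src {m : ℕ} (e : OEdge m) : Site m :=
  if e.ori then e.base else e.base + unitVec m e.dir

/-- The target vertex of an oriented edge. -/
def OEdge.tgt {m : ℕ} (e : OEdge m) : Site m :=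
  if e.ori then e.base + unitVec m e.dir else e.base

/-- `x ∈ B_N = [-N,N]^m ∩ ℤ^m`. -/
def inBox (m N : ℕ) (x : Site m) : Prop := ∀ i, |x i| ≤ (N : ℤ)

/-- `C_1(B_N)`: oriented edges with both endpoints in `B_N`. -/
def C1 (m N : ℕ) : Set (OEdge m) :=
  {e | inBox m N e.base ∧ inBox m N (e.base + unitVec m e.dir)}

/-- The four corners of a plaquette. -/
def OPlaq.corners {m : ℕ} (p : OPlaq m) : List (Site m) :=
  [p.base, p.base + unitVec m p.dir1, p.base + unitVec m p.dir2,
    p.base + unitVec m p.dir1 + unitVec m p.dir2]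

/-- The four oriented boundary edges of an oriented plaquette. -/
def OPlaq.bdry {m : ℕ} (p : OPlaq m) : List (OEdge m) :=
  let l : List (OEdge m) :=
    [⟨p.base, p.dir1, true⟩, ⟨p.base + unitVec m p.dir1, p.dir2, true⟩,
     ⟨p.base + unitVec m p.dir2, p.dir1, false⟩, ⟨p.base, p.dir2, false⟩]
  if p.ori then l else l.map OEdge.neg

/-- `C_2(B_N)`: oriented plaquettes with all corners in `B_N`. -/
def C2 (m N : ℕ) : Set (OPlaq m) :=
  {p | p.dir1 < p.dir2 ∧ ∀ x ∈ p.corners, inBox m N x}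

/-- `C_2(B_N)^+`: positively oriented plaquettes of `C_2(B_N)`. -/
def C2plus (m N : ℕ) : Set (OPlaq m) := {p | p ∈ C2 m N ∧ p.ori = true}

/-- `supp ∂̂e`: the plaquettes of `C_2(B_N)` whose oriented boundary contains `e`. -/
def cob (m N : ℕ) (e : OEdge m) : Set (OPlaq m) := {p | p ∈ C2 m N ∧ e ∈ p.bdry}

/-- A loop: a finitely supported `ℤ`-valued function on oriented edges with values in
`{-1,0,1}`, odd under orientation reversal, whose boundary vanishes as a `0`-chain. -/
structure IsLoop (m : ℕ) (γ : OEdge m → ℤ) : Prop where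
  finite_supp : (Function.support γ).Finite
  vals : ∀ e, γ e = -1 ∨ γ e = 0 ∨ γ e = 1
  antisym : ∀ e, γ (OEdge.neg e) = - γ e
  bdry_zero : ∀ v : Site m,
    (∑ᶠ e : OEdge m, γ e *
      ((if OEdge.tgt e = v then 1 else 0) - (if OEdge.src e = v then (1 : ℤ) else 0))) = 0

/-- A loop supported in `B_N`. -/
def LoopIn (m N : ℕ) (γ : OEdge m → ℤ) : Prop :=
  IsLoop m γ ∧ ∀ e, γ e ≠ 0 → e ∈ C1 m N

/-- `Ω^1(B_N, ℤ₂)`: `ℤ₂`-valued one-forms on `C_1(B_N)`. -/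
def Omega1 (m N : ℕ) : Set (OEdge m → ZMod 2) :=
  {σ | (∀ e, e ∉ C1 m N → σ e = 0) ∧ ∀ e, σ (OEdge.neg e) = - σ e}

/-- The natural representation `ρ(g) = e^{iπ g} ∈ {±1}` of `ℤ₂`. -/
noncomputable def rho (g : ZMod 2) : ℝ := if g = 0 then 1 else -1

/-- The exterior derivative `dσ(p) = Σ_{e ∈ ∂p} σ(e)`. -/
def dOne {m : ℕ} (σ : OEdge m → ZMod 2) (p : OPlaq m) : ZMod 2 := (p.bdry.map σ).sum

/-- The Wilson action `S(σ) = -Σ_{p ∈ C_2(B_N)} ρ(dσ(p))`. -/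
noncomputable def action (m N : ℕ) (σ : OEdge m → ZMod 2) : ℝ :=
  - ∑ᶠ p ∈ C2 m N, rho (dOne σ p)

/-- The Wilson loop variable `W_γ(σ) = Π_{e ∈ (supp γ)^+} ρ(σ(e))`. -/
noncomputable def wilson (m : ℕ) (γ : OEdge m → ℤ) (σ : OEdge m → ZMod 2) : ℝ :=
  ∏ᶠ e ∈ {e : OEdge m | γ e ≠ 0 ∧ e.ori = true}, rho (σ e)

/-- `Z_{β,N}[γ] = Σ_{σ ∈ Ω^1(B_N,ℤ₂)} W_γ(σ) e^{-β S(σ)}`. -/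
noncomputable def Z (m N : ℕ) (β : ℝ) (γ : OEdge m → ℤ) : ℝ :=
  ∑ᶠ σ ∈ Omega1 m N, wilson m γ σ * Real.exp (- β * action m N σ)

/-- The finite-volume Gibbs expectation `E_{N,β}[f]`. -/
noncomputable def Eexp (m N : ℕ) (β : ℝ) (f : (OEdge m → ZMod 2) → ℝ) : ℝ :=
  (∑ᶠ σ ∈ Omega1 m N, f σ * Real.exp (- β * action m N σ)) /
    (∑ᶠ σ ∈ Omega1 m N, Real.exp (- β * action m N σ))

/-- `E_{N,β}[W_γ]`. -/
noncomputable def Ewilson (m N : ℕ) (β : ℝ) (γ : OEdge m → ℤ) : ℝ :=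
  Eexp m N β (wilson m γ)

/-- A current: an integer-valued `2`-form on `C_2(B_N)` that is nonnegative on
positively oriented plaquettes. -/
def IsCurrent (m N : ℕ) (n : OPlaq m → ℤ) : Prop :=
  (∀ p, p ∉ C2 m N → n p = 0) ∧ (∀ p, n (OPlaq.neg p) = - n p) ∧
    (∀ p ∈ C2plus m N, 0 ≤ n p)

/-- `𝒞_γ`: the currents with source `γ`. -/
def CurSet (m N : ℕ) (γ : OEdge m → ℤ) : Set (OPlaq m → ℤ) :=
  {n | IsCurrent m N n ∧ ∀ e ∈ C1 m N,
      ((γ e : ZMod 2) + ∑ᶠ p ∈ cob m N e, ((n p : ZMod 2))) = 0}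

/-- The weight `w_β(n) = Π_{p ∈ C_2(B_N)^+} (2β)^{n(p)}/n(p)!` of a current. -/
noncomputable def wgt (m N : ℕ) (β : ℝ) (n : OPlaq m → ℤ) : ℝ :=
  ∏ᶠ p ∈ C2plus m N, (2 * β) ^ (n p).toNat / (Nat.factorial (n p).toNat)

/-- `q ≤ n` on positively oriented plaquettes. -/
def leOn (m N : ℕ) (q n : OPlaq m → ℤ) : Prop := ∀ p ∈ C2plus m N, q p ≤ n p

/-- `𝒫_γ^{ht}`: `ℤ₂`-valued `2`-forms on `C_2(B_N)` with `δω = γ (mod 2)`. -/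
def HTset (m N : ℕ) (γ : OEdge m → ℤ) : Set (OPlaq m → ZMod 2) :=
  {ω | (∀ p, p ∉ C2 m N → ω p = 0) ∧ (∀ p, ω (OPlaq.neg p) = - ω p) ∧
    ∀ e ∈ C1 m N, (∑ᶠ p ∈ cob m N e, ω p) = (γ e : ZMod 2)}

/-- `(supp ω)^+`. -/
def suppPlus (m N : ℕ) (ω : OPlaq m → ZMod 2) : Set (OPlaq m) :=
  {p | p ∈ C2plus m N ∧ ω p ≠ 0}

/-- The high-temperature weight `(tanh 2β)^{|(supp ω)^+|}`. -/
noncomputable def htWeight (m N : ℕ) (β : ℝ) (ω : OPlaq m → ZMod 2) : ℝ :=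
  Real.tanh (2 * β) ^ (Nat.card ↥(suppPlus m N ω))

/-- The high-temperature model `P^γ_{B_N,β}`: probability mass of `ω ∈ 𝒫_γ^{ht}`. -/
noncomputable def htProb (m N : ℕ) (β : ℝ) (γ : OEdge m → ℤ) (ω : OPlaq m → ZMod 2) : ℝ :=
  htWeight m N β ω / ∑ᶠ ω' ∈ HTset m N γ, htWeight m N β ω'

/-- The random current model `𝐏^γ_{B_N,β}`: probability of an event `A ⊆ 𝒞_γ`. -/
noncomputable def rcProb (m N : ℕ) (β : ℝ) (γ : OEdge m → ℤ) (A : Set (OPlaq m → ℤ)) : ℝ :=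
  (∑' n : ↥(CurSet m N γ ∩ A), wgt m N β n) / (∑' n : ↥(CurSet m N γ), wgt m N β n)

/-- The trace `n̂` of a current: the set of positively oriented plaquettes where `n > 0`. -/
def hatCur (m N : ℕ) (n : OPlaq m → ℤ) : Set (OPlaq m) :=
  {p | p ∈ C2plus m N ∧ 0 < n p}

/-- The probability that iid Bernoulli plaquette percolation `Ψ_q` on `C_2(B_N)^+`
produces exactly the configuration (subset) `A`. -/
noncomputable def bernoulli (m N : ℕ) (q : ℝ) (A : Set (OPlaq m)) : ℝ :=
  ∏ᶠ p ∈ C2plus m N, (if p ∈ A then q else 1 - q)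

/-- `∂P ≡ γ (mod 2)`: for every edge `e ∈ C_1(B_N)` the number of plaquettes of `P`
whose boundary contains `e` or `-e` is congruent to `γ(e)` mod `2`. -/
def BdryCong (m N : ℕ) (P : Set (OPlaq m)) (γ : OEdge m → ℤ) : Prop :=
  ∀ e ∈ C1 m N,
    ((Nat.card ↥{p ∈ P | e ∈ p.bdry ∨ OEdge.neg e ∈ p.bdry} : ZMod 2)) = (γ e : ZMod 2)

/-- `𝒫_γ`: subsets of `C_2(B_N)^+` containing a subset with boundary `γ (mod 2)`. -/
def PlaqSet (m N : ℕ) (γ : OEdge m → ℤ) : Set (Set (OPlaq m)) :=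
  {P | P ⊆ C2plus m N ∧ ∃ P', P' ⊆ P ∧ BdryCong m N P' γ}

/-- `N₀(P)`: the number of `σ ∈ Ω^1(B_N,ℤ₂)` with `dσ(p) = 0` for all `p ∈ P`. -/
noncomputable def N0 (m N : ℕ) (P : Set (OPlaq m)) : ℕ :=
  Nat.card ↥{σ ∈ Omega1 m N | ∀ p ∈ P, dOne σ p = 0}

/-- The random cluster weight `N₀(P) q^{|P|} (1-q)^{|C_2(B_N)^+ ∖ P|}`. -/
noncomputable def rcmWeight (m N : ℕ) (q : ℝ) (P : Set (OPlaq m)) : ℝ :=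
  (N0 m N P : ℝ) * q ^ (Nat.card ↥P) * (1 - q) ^ (Nat.card ↥(C2plus m N \ P))

/-- The random cluster model `φ^γ_{B_N,q}`: probability mass of `P` (zero off `𝒫_γ`). -/
noncomputable def rcmProb (m N : ℕ) (q : ℝ) (γ : OEdge m → ℤ) (P : Set (OPlaq m)) : ℝ :=
  (if P ∈ PlaqSet m N γ then rcmWeight m N q P else 0) /
    ∑ᶠ P' ∈ PlaqSet m N γ, rcmWeight m N q P'

/-- `S_γ(P)`: the subsets of `P` with boundary `γ (mod 2)`. -/
def Sset (m N : ℕ) (γ : OEdge m → ℤ) (P : Set (OPlaq m)) : Set (Set (OPlaq m)) :=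
  {P' | P' ⊆ P ∧ BdryCong m N P' γ}

/-- The `ℤ₂`-valued `2`-form whose support among positively oriented plaquettes is `P'`. -/
noncomputable def formOf {m : ℕ} (P' : Set (OPlaq m)) : OPlaq m → ZMod 2 :=
  fun p => if p ∈ P' ∨ OPlaq.neg p ∈ P' then 1 else 0

/-- The vertices of the support of a loop. -/
def vertsOf (m : ℕ) (γ : OEdge m → ℤ) : Set (Site m) :=
  {x | ∃ e, γ e ≠ 0 ∧ (x = OEdge.src e ∨ x = OEdge.tgt e)}

/-- The graph (`ℓ¹`) distance between two sites of `ℤ^m`. -/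
def distL1 (m : ℕ) (x y : Site m) : ℕ := ∑ i, (x i - y i).natAbs

/-- The minimal graph distance between the supports of two loops. -/
noncomputable def suppDist (m : ℕ) (γ γ' : OEdge m → ℤ) : ℕ :=
  sInf {d | ∃ x ∈ vertsOf m γ, ∃ y ∈ vertsOf m γ', d = distL1 m x y}

/-- `area(γ) = min_{n ∈ 𝒞_γ} Σ_{p ∈ C_2(B_N)^+} n(p)`. -/
noncomputable def areaOf (m N : ℕ) (γ : OEdge m → ℤ) : ℕ :=
  sInf {k : ℕ | ∃ n ∈ CurSet m N γ, (∑ᶠ p ∈ C2plus m N, n p) = (k : ℤ)}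

/-- Translation of a loop by a lattice vector. -/
def translate (m : ℕ) (v : Site m) (γ : OEdge m → ℤ) : OEdge m → ℤ :=
  fun e => γ ⟨e.base - v, e.dir, e.ori⟩

/-- The site `a·e₀ + b·e₁` in the fixed coordinate plane spanned by the first two
coordinate directions. -/
def planeSite (m : ℕ) (h : 1 < m) (a b : ℤ) : Site m :=
  fun j => if j = (⟨0, by omega⟩ : Fin m) then a else if j = (⟨1, h⟩ : Fin m) then b else 0

/-- The axis-parallel rectangular loop `γ_{R,T}` with corners `0, R·e₀, R·e₀+T·e₁, T·e₁`
in the fixed coordinate plane spanned by the first two coordinate directions. -/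
noncomputable def rectLoop (m : ℕ) (h : 1 < m) (R T : ℕ) : OEdge m → ℤ := fun e =>
  (∑ k ∈ Finset.range R,
    ((if e = ⟨planeSite m h k 0, ⟨0, by omega⟩, true⟩ then (1 : ℤ) else 0)
      - (if e = OEdge.neg ⟨planeSite m h k 0, ⟨0, by omega⟩, true⟩ then 1 else 0)
      - (if e = ⟨planeSite m h k T, ⟨0, by omega⟩, true⟩ then 1 else 0)
      + (if e = OEdge.neg ⟨planeSite m h k T, ⟨0, by omega⟩, true⟩ then 1 else 0)))
  + (∑ k ∈ Finset.range T,
    ((if e = ⟨planeSite m h R k, ⟨1, h⟩, true⟩ then (1 : ℤ) else 0)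
      - (if e = OEdge.neg ⟨planeSite m h R k, ⟨1, h⟩, true⟩ then 1 else 0)
      - (if e = ⟨planeSite m h 0 k, ⟨1, h⟩, true⟩ then 1 else 0)
      + (if e = OEdge.neg ⟨planeSite m h 0 k, ⟨1, h⟩, true⟩ then 1 else 0)))



/-- one-element Ahlswede–Daykin lemma -/
lemma ad_one {a0 a1 b0 b1 c0 c1 d0 d1 : ℝ}
    (ha0 : 0 ≤ a0) (ha1 : 0 ≤ a1) (hb0 : 0 ≤ b0) (hb1 : 0 ≤ b1)
    (hc0 : 0 ≤ c0) (hc1 : 0 ≤ c1) (hd0 : 0 ≤ d0) (hd1 : 0 ≤ d1)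
    (h00 : a0 * b0 ≤ c0 * d0) (h01 : a0 * b1 ≤ c1 * d0)
    (h10 : a1 * b0 ≤ c1 * d0) (h11 : a1 * b1 ≤ c1 * d1) :
    (a0 + a1) * (b0 + b1) ≤ (c0 + c1) * (d0 + d1) := by
  rcases eq_or_lt_of_le (mul_nonneg hc1 hd0) with h | h
  · -- c1 * d0 = 0, so a0b1 = a1b0 = 0
    have hcd : c1 * d0 = 0 := h.symm
    have e01 : a0 * b1 = 0 := le_antisymm (hcd ▸ h01) (mul_nonneg ha0 hb1)
    have e10 : a1 * b0 = 0 := le_antisymm (hcd ▸ h10) (mul_nonneg ha1 hb0)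
    nlinarith [mul_nonneg hc0 hd1, mul_nonneg hc1 hd0]
  · -- c1 * d0 > 0
    have key : a0 * b1 + a1 * b0 ≤ c1 * d0 + c0 * d1 := by
      have h1 : (c1 * d0 - a0 * b1) * (c1 * d0 - a1 * b0) ≥ 0 := by
        apply mul_nonneg <;> linarith
      have h2 : (a0 * b1) * (a1 * b0) = (a0 * b0) * (a1 * b1) := by ring
      have h3 : (a0 * b0) * (a1 * b1) ≤ (c0 * d0) * (c1 * d1) := by
        apply mul_le_mul h00 h11 (mul_nonneg ha1 hb1) (mul_nonneg hc0 hd0)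
      have h4 : c1 * d0 * (a0 * b1 + a1 * b0) ≤ c1 * d0 * (c1 * d0 + c0 * d1) := by
        nlinarith
      exact le_of_mul_le_mul_left (by linarith [h4]) h
    nlinarith

/-- Ahlswede–Daykin four functions theorem over the powerset of a finset. -/
theorem ad_thm {ι : Type*} [DecidableEq ι] (s : Finset ι)
    (α β γ δ : Finset ι → ℝ)
    (hα : ∀ A ∈ s.powerset, 0 ≤ α A) (hβ : ∀ A ∈ s.powerset, 0 ≤ β A)
    (hγ : ∀ A ∈ s.powerset, 0 ≤ γ A) (hδ : ∀ A ∈ s.powerset, 0 ≤ δ A)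
    (h : ∀ A ∈ s.powerset, ∀ B ∈ s.powerset, α A * β B ≤ γ (A ∪ B) * δ (A ∩ B)) :
    (∑ A ∈ s.powerset, α A) * (∑ A ∈ s.powerset, β A)
      ≤ (∑ A ∈ s.powerset, γ A) * (∑ A ∈ s.powerset, δ A) := by
  induction s using Finset.induction generalizing α β γ δ with
  | empty =>
      simp only [Finset.powerset_empty, Finset.sum_singleton]
      simpa using h ∅ (by simp) ∅ (by simp)
  | @insert x t hx ih =>
      have hsubt : ∀ A : Finset ι, A ∈ t.powerset → A ∈ (insert x t).powerset := by
        intro A hA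
        simp only [Finset.mem_powerset] at *
        exact hA.trans (Finset.subset_insert x t)
      have hsubt' : ∀ A : Finset ι, A ∈ t.powerset → insert x A ∈ (insert x t).powerset := by
        intro A hA
        simp only [Finset.mem_powerset] at *
        exact Finset.insert_subset_insert x hA
      rw [Finset.sum_powerset_insert hx, Finset.sum_powerset_insert hx,
        Finset.sum_powerset_insert hx, Finset.sum_powerset_insert hx]
      rw [← Finset.sum_add_distrib, ← Finset.sum_add_distrib, ← Finset.sum_add_distrib,
        ← Finset.sum_add_distrib]
      apply ih (fun A => α A + α (insert x A)) (fun A => β A + β (insert x A))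
        (fun A => γ A + γ (insert x A)) (fun A => δ A + δ (insert x A)) ?_ ?_ ?_ ?_ ?_
      · intro A hA; exact add_nonneg (hα A (hsubt A hA)) (hα _ (hsubt' A hA))
      · intro A hA; exact add_nonneg (hβ A (hsubt A hA)) (hβ _ (hsubt' A hA))
      · intro A hA; exact add_nonneg (hγ A (hsubt A hA)) (hγ _ (hsubt' A hA))
      · intro A hA; exact add_nonneg (hδ A (hsubt A hA)) (hδ _ (hsubt' A hA))
      · intro A hA B hB
        have hxA : x ∉ A := fun hc => hx (Finset.mem_powerset.mp hA hc)
        have hxB : x ∉ B := fun hc => hx (Finset.mem_powerset.mp hB hc)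
        have e1 : A ∪ insert x B = insert x (A ∪ B) := by
          ext y; simp [Finset.mem_insert, Finset.mem_union]
        have e2 : A ∩ insert x B = A ∩ B := by
          ext y; simp only [Finset.mem_inter, Finset.mem_insert]
          constructor
          · rintro ⟨hyA, hyB | hyB⟩
            · exact absurd (hyB ▸ hyA) hxA
            · exact ⟨hyA, hyB⟩
          · rintro ⟨hyA, hyB⟩; exact ⟨hyA, Or.inr hyB⟩
        have e3 : insert x A ∪ B = insert x (A ∪ B) := by
          ext y; simp [Finset.mem_insert, Finset.mem_union]
        have e4 : insert x A ∩ B = A ∩ B := by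
          ext y; simp only [Finset.mem_inter, Finset.mem_insert]
          constructor
          · rintro ⟨hyA | hyA, hyB⟩
            · exact absurd (hyA ▸ hyB) hxB
            · exact ⟨hyA, hyB⟩
          · rintro ⟨hyA, hyB⟩; exact ⟨Or.inr hyA, hyB⟩
        have e5 : insert x A ∪ insert x B = insert x (A ∪ B) := by
          ext y; simp [Finset.mem_insert, Finset.mem_union]
        have e6 : insert x A ∩ insert x B = insert x (A ∩ B) := by
          ext y; simp [Finset.mem_insert, Finset.mem_inter]; tauto
        have h00 := h A (hsubt A hA) B (hsubt B hB)
        have h01 := h A (hsubt A hA) (insert x B) (hsubt' B hB)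
        have h10 := h (insert x A) (hsubt' A hA) B (hsubt B hB)
        have h11 := h (insert x A) (hsubt' A hA) (insert x B) (hsubt' B hB)
        rw [e1, e2] at h01; rw [e3, e4] at h10; rw [e5, e6] at h11
        have hAB : A ∪ B ∈ t.powerset := by
          simp only [Finset.mem_powerset] at *
          exact Finset.union_subset hA hB
        have hABi : A ∩ B ∈ t.powerset := by
          simp only [Finset.mem_powerset] at *
          exact (Finset.inter_subset_left).trans hA
        exact ad_one (hα A (hsubt A hA)) (hα _ (hsubt' A hA)) (hβ B (hsubt B hB))
          (hβ _ (hsubt' B hB)) (hγ _ (hsubt _ hAB)) (hγ _ (hsubt' _ hAB))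
          (hδ _ (hsubt _ hABi)) (hδ _ (hsubt' _ hABi)) h00 h01 h10 h11

/-! ### Auxiliary lemmas -/

lemma box_finite (m N : ℕ) : {x : Site m | inBox m N x}.Finite := by
  have h : {x : Site m | inBox m N x} ⊆ Set.pi Set.univ (fun _ : Fin m => Set.Icc (-(N:ℤ)) N) := by
    intro x hx
    intro i _
    exact abs_le.mp (hx i)
  exact (Set.Finite.pi (fun i => Set.finite_Icc _ _)).subset h

lemma C1_finite (m N : ℕ) : (C1 m N).Finite := by
  have hF : Function.Injective (fun e : OEdge m => (e.base, e.dir, e.ori)) := by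
    intro e1 e2 h
    cases e1; cases e2
    simp only [Prod.mk.injEq] at h
    simp [h.1, h.2.1, h.2.2]
  have h : C1 m N ⊆ (fun e : OEdge m => (e.base, e.dir, e.ori)) ⁻¹'
      ({x : Site m | inBox m N x} ×ˢ (Set.univ : Set (Fin m)) ×ˢ (Set.univ : Set Bool)) := by
    intro e he
    exact ⟨he.1, trivial, trivial⟩
  exact (Set.Finite.preimage hF.injOn
    (((box_finite m N).prod (Set.finite_univ.prod Set.finite_univ)))).subset h

lemma C2plus_finite (m N : ℕ) : (C2plus m N).Finite := by
  have hF : Function.Injective (fun p : OPlaq m => (p.base, p.dir1, p.dir2, p.ori)) := by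
    intro p1 p2 h
    cases p1; cases p2
    simp only [Prod.mk.injEq] at h
    simp [h.1, h.2.1, h.2.2.1, h.2.2.2]
  have h : C2plus m N ⊆ (fun p : OPlaq m => (p.base, p.dir1, p.dir2, p.ori)) ⁻¹'
      ({x : Site m | inBox m N x} ×ˢ (Set.univ : Set (Fin m)) ×ˢ (Set.univ : Set (Fin m))
        ×ˢ (Set.univ : Set Bool)) := by
    intro p hp
    refine ⟨?_, trivial, trivial, trivial⟩
    exact hp.1.2 p.base (by simp [OPlaq.corners])
  exact (Set.Finite.preimage hF.injOn
    ((box_finite m N).prod (Set.finite_univ.prod (Set.finite_univ.prod Set.finite_univ)))).subset h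

/-- The set of all `ZMod 2`-valued functions supported in `C1` is finite. -/
lemma forms_finite (m N : ℕ) : {σ : OEdge m → ZMod 2 | ∀ e ∉ C1 m N, σ e = 0}.Finite := by
  classical
  have : Finite ↥(C1 m N) := (C1_finite m N).to_subtype
  set T := {σ : OEdge m → ZMod 2 | ∀ e ∉ C1 m N, σ e = 0}
  have hinj : Set.InjOn (fun (σ : OEdge m → ZMod 2) => fun e : ↥(C1 m N) => σ ↑e) T := by
    intro σ hσ τ hτ h
    funext e
    by_cases he : e ∈ C1 m N
    · exact congrFun h ⟨e, he⟩
    · rw [hσ e he, hτ e he]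
  have himg : ((fun (σ : OEdge m → ZMod 2) => fun e : ↥(C1 m N) => σ ↑e) '' T).Finite :=
    Set.toFinite _
  exact Set.Finite.of_finite_image himg hinj

/-- `K P`: the configurations counted by `N0`. -/
def Kset (m N : ℕ) (P : Set (OPlaq m)) : Set (OEdge m → ZMod 2) :=
  {σ ∈ Omega1 m N | ∀ p ∈ P, dOne σ p = 0}

lemma N0_eq_ncard (m N : ℕ) (P : Set (OPlaq m)) : N0 m N P = (Kset m N P).ncard := by
  rw [N0, Nat.card_coe_set_eq]; rfl

lemma Kset_finite (m N : ℕ) (P : Set (OPlaq m)) : (Kset m N P).Finite :=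
  (forms_finite m N).subset (fun σ hσ => hσ.1.1)

lemma dOne_zero (m : ℕ) (p : OPlaq m) : dOne (0 : OEdge m → ZMod 2) p = 0 := by
  unfold dOne
  induction p.bdry with
  | nil => simp
  | cons e l ih => simp only [List.map_cons, List.sum_cons, ih, Pi.zero_apply, zero_add]

lemma zero_mem_Kset (m N : ℕ) (P : Set (OPlaq m)) : (0 : OEdge m → ZMod 2) ∈ Kset m N P := by
  refine ⟨⟨fun e _ => rfl, fun e => by simp⟩, fun p _ => dOne_zero m p⟩

lemma dOne_add (m : ℕ) (σ τ : OEdge m → ZMod 2) (p : OPlaq m) :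
    dOne (σ + τ) p = dOne σ p + dOne τ p := by
  unfold dOne
  induction p.bdry with
  | nil => simp
  | cons e l ih => simp only [List.map_cons, List.sum_cons, ih, Pi.add_apply]; ring

lemma add_mem_Kset (m N : ℕ) (P : Set (OPlaq m)) {σ τ : OEdge m → ZMod 2}
    (hσ : σ ∈ Kset m N P) (hτ : τ ∈ Kset m N P) : σ + τ ∈ Kset m N P := by
  refine ⟨⟨fun e he => ?_, fun e => ?_⟩, fun p hp => ?_⟩
  · simp [hσ.1.1 e he, hτ.1.1 e he]
  · simp [hσ.1.2 e, hτ.1.2 e]; ring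
  · rw [dOne_add, hσ.2 p hp, hτ.2 p hp, add_zero]

lemma N0_pos (m N : ℕ) (P : Set (OPlaq m)) : 0 < N0 m N P := by
  rw [N0_eq_ncard]
  exact Set.ncard_pos (Kset_finite m N P) |>.mpr ⟨0, zero_mem_Kset m N P⟩

lemma N0_insert_le (m N : ℕ) (P : Set (OPlaq m)) (p : OPlaq m) :
    N0 m N (insert p P) ≤ N0 m N P := by
  rw [N0_eq_ncard, N0_eq_ncard]
  apply Set.ncard_le_ncard _ (Kset_finite m N P)
  intro σ hσ
  exact ⟨hσ.1, fun p' hp' => hσ.2 p' (Set.mem_insert_of_mem p hp')⟩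

lemma N0_le_two_insert (m N : ℕ) (P : Set (OPlaq m)) (p : OPlaq m) :
    N0 m N P ≤ 2 * N0 m N (insert p P) := by
  classical
  rw [N0_eq_ncard, N0_eq_ncard]
  by_cases hall : ∀ σ ∈ Kset m N P, dOne σ p = 0
  · have : Kset m N P ⊆ Kset m N (insert p P) := by
      intro σ hσ
      refine ⟨hσ.1, fun p' hp' => ?_⟩
      rcases Set.mem_insert_iff.mp hp' with h | h
      · rw [h]; exact hall σ hσ
      · exact hσ.2 p' h
    calc (Kset m N P).ncard ≤ (Kset m N (insert p P)).ncard :=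
          Set.ncard_le_ncard this (Kset_finite m N _)
      _ ≤ 2 * (Kset m N (insert p P)).ncard := by omega
  · push_neg at hall
    obtain ⟨σ0, hσ0mem, hσ0⟩ := hall
    have hzd : ∀ a : ZMod 2, a ≠ 0 → a = 1 := by decide
    have hσ0one : dOne σ0 p = 1 := hzd _ hσ0
    have hsub : Kset m N P ⊆ Kset m N (insert p P) ∪
        ((fun σ => σ + σ0) '' Kset m N (insert p P)) := by
      intro σ hσ
      by_cases hd : dOne σ p = 0
      · left
        refine ⟨hσ.1, fun p' hp' => ?_⟩
        rcases Set.mem_insert_iff.mp hp' with h | h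
        · rw [h]; exact hd
        · exact hσ.2 p' h
      · right
        have hmem : σ + σ0 ∈ Kset m N (insert p P) := by
          refine ⟨(add_mem_Kset m N P hσ hσ0mem).1, fun p' hp' => ?_⟩
          rcases Set.mem_insert_iff.mp hp' with h | h
          · rw [h, dOne_add, hσ0one, hzd _ hd]; decide
          · exact (add_mem_Kset m N P hσ hσ0mem).2 p' h
        refine ⟨σ + σ0, hmem, ?_⟩
        have h2 : ∀ a : ZMod 2, a + a = 0 := by decide
        funext e
        simp [Pi.add_apply, add_assoc, h2 (σ0 e)]
    calc (Kset m N P).ncard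
        ≤ (Kset m N (insert p P) ∪ ((fun σ => σ + σ0) '' Kset m N (insert p P))).ncard :=
          Set.ncard_le_ncard hsub
            (((Kset_finite m N _)).union ((Kset_finite m N _).image _))
      _ ≤ (Kset m N (insert p P)).ncard + ((fun σ => σ + σ0) '' Kset m N (insert p P)).ncard :=
          Set.ncard_union_le _ _
      _ ≤ (Kset m N (insert p P)).ncard + (Kset m N (insert p P)).ncard := by
          have := Set.ncard_image_le (f := fun σ => σ + σ0) (s := Kset m N (insert p P))
            (Kset_finite m N (insert p P))
          omega
      _ = 2 * (Kset m N (insert p P)).ncard := by ring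

lemma card_coe_finset {X : Type*} (A : Finset X) : Nat.card ↥(↑A : Set X) = A.card := by
  rw [Nat.card_coe_set_eq, Set.ncard_coe_finset]

lemma rcmWeight_coe (m N : ℕ) (q : ℝ) (A : Finset (OPlaq m))
    (hA : A ⊆ (C2plus_finite m N).toFinset) :
    rcmWeight m N q ↑A = (N0 m N ↑A : ℝ) * q ^ A.card
      * (1-q) ^ ((C2plus_finite m N).toFinset.card - A.card) := by
  rw [rcmWeight, card_coe_finset]
  congr 2
  have h1 : C2plus m N \ ↑A = ↑((C2plus_finite m N).toFinset \ A) := by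
    rw [Finset.coe_sdiff, Set.Finite.coe_toFinset]
  rw [h1, card_coe_finset, Finset.card_sdiff_of_subset hA]

lemma rcmWeight_nonneg (m N : ℕ) {q : ℝ} (hq0 : 0 ≤ q) (hq1 : q ≤ 1) (P : Set (OPlaq m)) :
    0 ≤ rcmWeight m N q P := by
  unfold rcmWeight
  have h1 : (0:ℝ) ≤ 1 - q := by linarith
  positivity

lemma step_le (m N : ℕ) {q : ℝ} (hq0 : 0 ≤ q) (hq1 : q ≤ 1) (A : Finset (OPlaq m))
    (p : OPlaq m) (hA : A ⊆ (C2plus_finite m N).toFinset)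
    (hp : p ∈ (C2plus_finite m N).toFinset) (hpA : p ∉ A) :
    (1-q) * rcmWeight m N q ↑(insert p A) ≤ q * rcmWeight m N q ↑A := by
  set S := (C2plus_finite m N).toFinset with hSdef
  have hsub : insert p A ⊆ S := Finset.insert_subset hp hA
  have hcard : (insert p A).card = A.card + 1 := Finset.card_insert_of_notMem hpA
  have hle : A.card + 1 ≤ S.card := hcard ▸ Finset.card_le_card hsub
  rw [rcmWeight_coe m N q _ hsub, rcmWeight_coe m N q _ hA, hcard]
  set c := A.card
  set k := S.card - (c + 1) with hk
  have h2 : S.card - c = k + 1 := by omega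
  rw [h2]
  have hN0 : N0 m N ↑(insert p A) ≤ N0 m N ↑A := by
    rw [Finset.coe_insert]
    exact N0_insert_le m N ↑A p
  have h3 : (0:ℝ) ≤ 1 - q := by linarith
  calc (1-q) * ((N0 m N ↑(insert p A) : ℝ) * q ^ (c+1) * (1-q) ^ k)
      = (N0 m N ↑(insert p A) : ℝ) * (q ^ (c+1) * (1-q) ^ (k+1)) := by ring
    _ ≤ (N0 m N ↑A : ℝ) * (q ^ (c+1) * (1-q) ^ (k+1)) := by
        apply mul_le_mul_of_nonneg_right (by exact_mod_cast hN0) (by positivity)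
    _ = q * ((N0 m N ↑A : ℝ) * q ^ c * (1-q) ^ (k+1)) := by ring

lemma step_ge1 (m N : ℕ) {q q1 : ℝ} (hq0 : 0 ≤ q) (hq1 : q ≤ 1) (hq10 : 0 ≤ q1)
    (hrel : (1-q1) * q = 2 * (q1 * (1-q))) (A : Finset (OPlaq m))
    (p : OPlaq m) (hA : A ⊆ (C2plus_finite m N).toFinset)
    (hp : p ∈ (C2plus_finite m N).toFinset) (hpA : p ∉ A) :
    q1 * rcmWeight m N q ↑A ≤ (1-q1) * rcmWeight m N q ↑(insert p A) := by
  set S := (C2plus_finite m N).toFinset with hSdef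
  have hsub : insert p A ⊆ S := Finset.insert_subset hp hA
  have hcard : (insert p A).card = A.card + 1 := Finset.card_insert_of_notMem hpA
  have hle : A.card + 1 ≤ S.card := hcard ▸ Finset.card_le_card hsub
  rw [rcmWeight_coe m N q _ hsub, rcmWeight_coe m N q _ hA, hcard]
  set c := A.card
  set k := S.card - (c + 1) with hk
  have h2 : S.card - c = k + 1 := by omega
  rw [h2]
  have hN0 : N0 m N ↑A ≤ 2 * N0 m N ↑(insert p A) := by
    rw [Finset.coe_insert]
    exact N0_le_two_insert m N ↑A p
  have h3 : (0:ℝ) ≤ 1 - q := by linarith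
  have key : (N0 m N ↑A : ℝ) ≤ 2 * (N0 m N ↑(insert p A) : ℝ) := by exact_mod_cast hN0
  calc q1 * ((N0 m N ↑A : ℝ) * q ^ c * (1-q) ^ (k+1))
      = (N0 m N ↑A : ℝ) * (q1 * (1-q) * (q ^ c * (1-q) ^ k)) := by ring
    _ ≤ 2 * (N0 m N ↑(insert p A) : ℝ) * (q1 * (1-q) * (q ^ c * (1-q) ^ k)) := by
        apply mul_le_mul_of_nonneg_right key (by positivity)
    _ = (N0 m N ↑(insert p A) : ℝ) * ((2 * (q1 * (1-q))) * (q ^ c * (1-q) ^ k)) := by ring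
    _ = (N0 m N ↑(insert p A) : ℝ) * (((1-q1) * q) * (q ^ c * (1-q) ^ k)) := by rw [hrel]
    _ = (1-q1) * ((N0 m N ↑(insert p A) : ℝ) * q ^ (c+1) * (1-q) ^ k) := by ring

lemma union_le (m N : ℕ) {q : ℝ} (hq0 : 0 ≤ q) (hq1 : q ≤ 1) (A C : Finset (OPlaq m))
    (hA : A ⊆ (C2plus_finite m N).toFinset) (hC : C ⊆ (C2plus_finite m N).toFinset)
    (hd : Disjoint A C) :
    (1-q) ^ C.card * rcmWeight m N q ↑(A ∪ C) ≤ q ^ C.card * rcmWeight m N q ↑A := by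
  classical
  induction C using Finset.induction with
  | empty => simp
  | @insert x C' hx ih =>
      have hxS : x ∈ (C2plus_finite m N).toFinset := hC (Finset.mem_insert_self x C')
      have hC'S : C' ⊆ (C2plus_finite m N).toFinset :=
        fun y hy => hC (Finset.mem_insert_of_mem hy)
      have hd' : Disjoint A C' := hd.mono_right (Finset.subset_insert x C')
      have hxA : x ∉ A := fun hc =>
        (Finset.disjoint_left.mp hd hc) (Finset.mem_insert_self x C')
      have hxAC : x ∉ A ∪ C' := by simp [hxA, hx]
      have hACS : A ∪ C' ⊆ (C2plus_finite m N).toFinset := Finset.union_subset hA hC'S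
      have hcard : (insert x C').card = C'.card + 1 := Finset.card_insert_of_notMem hx
      have hq' : (0:ℝ) ≤ 1 - q := by linarith
      have hWn : 0 ≤ rcmWeight m N q ↑(A ∪ C') := rcmWeight_nonneg m N hq0 hq1 _
      have hstep := step_le m N hq0 hq1 (A ∪ C') x hACS hxS hxAC
      have hunion : A ∪ insert x C' = insert x (A ∪ C') := Finset.union_insert x A C'
      rw [hunion, hcard, pow_succ, pow_succ]
      calc (1-q) ^ C'.card * (1-q) * rcmWeight m N q ↑(insert x (A ∪ C'))
          = (1-q) ^ C'.card * ((1-q) * rcmWeight m N q ↑(insert x (A ∪ C'))) := by ring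
        _ ≤ (1-q) ^ C'.card * (q * rcmWeight m N q ↑(A ∪ C')) :=
            mul_le_mul_of_nonneg_left hstep (by positivity)
        _ = q * ((1-q) ^ C'.card * rcmWeight m N q ↑(A ∪ C')) := by ring
        _ ≤ q * (q ^ C'.card * rcmWeight m N q ↑A) :=
            mul_le_mul_of_nonneg_left (ih hC'S hd') hq0
        _ = q ^ C'.card * q * rcmWeight m N q ↑A := by ring

lemma union_ge1 (m N : ℕ) {q q1 : ℝ} (hq0 : 0 ≤ q) (hq1 : q ≤ 1) (hq10 : 0 ≤ q1)
    (hq11 : q1 ≤ 1) (hrel : (1-q1) * q = 2 * (q1 * (1-q))) (A C : Finset (OPlaq m))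
    (hA : A ⊆ (C2plus_finite m N).toFinset) (hC : C ⊆ (C2plus_finite m N).toFinset)
    (hd : Disjoint A C) :
    q1 ^ C.card * rcmWeight m N q ↑A ≤ (1-q1) ^ C.card * rcmWeight m N q ↑(A ∪ C) := by
  classical
  induction C using Finset.induction with
  | empty => simp
  | @insert x C' hx ih =>
      have hxS : x ∈ (C2plus_finite m N).toFinset := hC (Finset.mem_insert_self x C')
      have hC'S : C' ⊆ (C2plus_finite m N).toFinset :=
        fun y hy => hC (Finset.mem_insert_of_mem hy)
      have hd' : Disjoint A C' := hd.mono_right (Finset.subset_insert x C')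
      have hxA : x ∉ A := fun hc =>
        (Finset.disjoint_left.mp hd hc) (Finset.mem_insert_self x C')
      have hxAC : x ∉ A ∪ C' := by simp [hxA, hx]
      have hACS : A ∪ C' ⊆ (C2plus_finite m N).toFinset := Finset.union_subset hA hC'S
      have hcard : (insert x C').card = C'.card + 1 := Finset.card_insert_of_notMem hx
      have hq1' : (0:ℝ) ≤ 1 - q1 := by linarith
      have hstep := step_ge1 m N hq0 hq1 hq10 hrel (A ∪ C') x hACS hxS hxAC
      have hunion : A ∪ insert x C' = insert x (A ∪ C') := Finset.union_insert x A C'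
      rw [hunion, hcard, pow_succ, pow_succ]
      calc q1 ^ C'.card * q1 * rcmWeight m N q ↑A
          = q1 * (q1 ^ C'.card * rcmWeight m N q ↑A) := by ring
        _ ≤ q1 * ((1-q1) ^ C'.card * rcmWeight m N q ↑(A ∪ C')) :=
            mul_le_mul_of_nonneg_left (ih hC'S hd') hq10
        _ = (1-q1) ^ C'.card * (q1 * rcmWeight m N q ↑(A ∪ C')) := by ring
        _ ≤ (1-q1) ^ C'.card * ((1-q1) * rcmWeight m N q ↑(insert x (A ∪ C'))) :=
            mul_le_mul_of_nonneg_left hstep (by positivity)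
        _ = (1-q1) ^ C'.card * (1-q1) * rcmWeight m N q ↑(insert x (A ∪ C')) := by ring

/-- Unnormalized Bernoulli weight. -/
noncomputable def BW (m N : ℕ) (r : ℝ) (A : Finset (OPlaq m)) : ℝ :=
  r ^ A.card * (1-r) ^ ((C2plus_finite m N).toFinset.card - A.card)

lemma BW_nonneg (m N : ℕ) {r : ℝ} (hr0 : 0 ≤ r) (hr1 : r ≤ 1) (A : Finset (OPlaq m)) :
    0 ≤ BW m N r A := by
  have : (0:ℝ) ≤ 1 - r := by linarith
  unfold BW; positivity

/-- Holley condition, lower bound: `W(A) BW1(B) ≤ W(A∪B) BW1(A∩B)`. -/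
lemma holley_low (m N : ℕ) {q q1 : ℝ} (hq0 : 0 ≤ q) (hq1 : q ≤ 1) (hq10 : 0 ≤ q1)
    (hq11 : q1 ≤ 1) (hrel : (1-q1) * q = 2 * (q1 * (1-q))) (A B : Finset (OPlaq m))
    (hA : A ⊆ (C2plus_finite m N).toFinset) (hB : B ⊆ (C2plus_finite m N).toFinset) :
    rcmWeight m N q ↑A * BW m N q1 B ≤ rcmWeight m N q ↑(A ∪ B) * BW m N q1 (A ∩ B) := by
  classical
  set S := (C2plus_finite m N).toFinset with hSdef
  set C := B \ A with hCdef
  have hCS : C ⊆ S := (Finset.sdiff_subset).trans hB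
  have hdisj : Disjoint A C := Finset.disjoint_sdiff
  have hAC : A ∪ C = A ∪ B := Finset.union_sdiff_self_eq_union
  have hBcard : B.card = (A ∩ B).card + C.card := by
    rw [hCdef]
    have h := Finset.card_sdiff_add_card_inter B A
    rw [Finset.inter_comm] at h
    omega
  have hBn : B.card ≤ S.card := Finset.card_le_card hB
  have hn : S.card - (A ∩ B).card = (S.card - B.card) + C.card := by omega
  have hkey := union_ge1 m N hq0 hq1 hq10 hq11 hrel A C hA hCS hdisj
  rw [hAC] at hkey
  have hq1' : (0:ℝ) ≤ 1 - q1 := by linarith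
  unfold BW
  have e1 : q1 ^ B.card = q1 ^ (A ∩ B).card * q1 ^ C.card := by rw [hBcard, pow_add]
  have e2 : (1-q1) ^ (S.card - (A ∩ B).card)
      = (1-q1) ^ (S.card - B.card) * (1-q1) ^ C.card := by rw [hn, pow_add]
  rw [e1, e2]
  calc rcmWeight m N q ↑A * (q1 ^ (A ∩ B).card * q1 ^ C.card *
        (1-q1) ^ (S.card - B.card))
      = (q1 ^ C.card * rcmWeight m N q ↑A) *
          (q1 ^ (A ∩ B).card * (1-q1) ^ (S.card - B.card)) := by ring
    _ ≤ ((1-q1) ^ C.card * rcmWeight m N q ↑(A ∪ B)) *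
          (q1 ^ (A ∩ B).card * (1-q1) ^ (S.card - B.card)) := by
        apply mul_le_mul_of_nonneg_right hkey (by positivity)
    _ = rcmWeight m N q ↑(A ∪ B) *
          (q1 ^ (A ∩ B).card * ((1-q1) ^ (S.card - B.card) * (1-q1) ^ C.card)) := by ring

/-- Holley condition, upper bound: `BW(A) W(B) ≤ BW(A∪B) W(A∩B)`. -/
lemma holley_up (m N : ℕ) {q : ℝ} (hq0 : 0 ≤ q) (hq1 : q ≤ 1) (A B : Finset (OPlaq m))
    (hA : A ⊆ (C2plus_finite m N).toFinset) (hB : B ⊆ (C2plus_finite m N).toFinset) :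
    BW m N q A * rcmWeight m N q ↑B ≤ BW m N q (A ∪ B) * rcmWeight m N q ↑(A ∩ B) := by
  classical
  set S := (C2plus_finite m N).toFinset with hSdef
  set C := B \ A with hCdef
  have hCS : C ⊆ S := (Finset.sdiff_subset).trans hB
  have hABS : A ∩ B ⊆ S := (Finset.inter_subset_left).trans hA
  have hdisj : Disjoint (A ∩ B) C := by
    apply Finset.disjoint_left.mpr
    intro y hy hyC
    exact (Finset.mem_sdiff.mp hyC).2 (Finset.mem_inter.mp hy).1
  have hIC : (A ∩ B) ∪ C = B := by
    ext y
    simp only [Finset.mem_union, Finset.mem_inter, Finset.mem_sdiff, hCdef]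
    tauto
  have hABcard : (A ∪ B).card = A.card + C.card := by
    have hu : A ∪ B = A ∪ C := by rw [hCdef, Finset.union_sdiff_self_eq_union]
    rw [hu, hCdef]
    exact Finset.card_union_of_disjoint Finset.disjoint_sdiff
  have hABn : (A ∪ B).card ≤ S.card := Finset.card_le_card (Finset.union_subset hA hB)
  have hn : S.card - A.card = (S.card - (A ∪ B).card) + C.card := by omega
  have hkey := union_le m N hq0 hq1 (A ∩ B) C hABS hCS hdisj
  rw [hIC] at hkey
  have hq' : (0:ℝ) ≤ 1 - q := by linarith
  unfold BW
  have e1 : q ^ (A ∪ B).card = q ^ A.card * q ^ C.card := by rw [hABcard, pow_add]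
  have e2 : (1-q) ^ (S.card - A.card)
      = (1-q) ^ (S.card - (A ∪ B).card) * (1-q) ^ C.card := by rw [hn, pow_add]
  rw [e1, e2]
  calc q ^ A.card * ((1-q) ^ (S.card - (A ∪ B).card) * (1-q) ^ C.card) *
        rcmWeight m N q ↑B
      = ((1-q) ^ C.card * rcmWeight m N q ↑B) *
          (q ^ A.card * (1-q) ^ (S.card - (A ∪ B).card)) := by ring
    _ ≤ (q ^ C.card * rcmWeight m N q ↑(A ∩ B)) *
          (q ^ A.card * (1-q) ^ (S.card - (A ∪ B).card)) := by
        apply mul_le_mul_of_nonneg_right hkey (by positivity)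
    _ = q ^ A.card * q ^ C.card * (1-q) ^ (S.card - (A ∪ B).card) *
          rcmWeight m N q ↑(A ∩ B) := by ring

lemma bern_coe (m N : ℕ) (r : ℝ) (B : Finset (OPlaq m))
    (hB : B ⊆ (C2plus_finite m N).toFinset) :
    bernoulli m N r ↑B = BW m N r B := by
  classical
  unfold bernoulli BW
  conv_lhs => rw [← Set.Finite.coe_toFinset (C2plus_finite m N)]
  rw [finprod_mem_coe_finset, ← Finset.prod_sdiff hB]
  simp only [Finset.mem_coe]
  have h1 : ∀ p ∈ (C2plus_finite m N).toFinset \ B,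
      (if p ∈ B then r else 1-r) = 1-r := by
    intro p hp
    rw [if_neg (Finset.mem_sdiff.mp hp).2]
  have h2 : ∀ p ∈ B, (if p ∈ B then r else 1-r) = r := by
    intro p hp
    rw [if_pos hp]
  rw [Finset.prod_congr rfl h1, Finset.prod_congr rfl h2, Finset.prod_const,
    Finset.prod_const, Finset.card_sdiff_of_subset hB, mul_comm]

lemma sum_BW (m N : ℕ) (r : ℝ) :
    ∑ B ∈ (C2plus_finite m N).toFinset.powerset, BW m N r B = 1 := by
  classical
  have h1 : ∏ _p ∈ (C2plus_finite m N).toFinset, (r + (1-r)) = 1 := by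
    rw [Finset.prod_congr rfl (fun p _ => by ring : ∀ p ∈ (C2plus_finite m N).toFinset,
      r + (1-r) = (1:ℝ)), Finset.prod_const_one]
  calc ∑ B ∈ (C2plus_finite m N).toFinset.powerset, BW m N r B
      = ∑ B ∈ (C2plus_finite m N).toFinset.powerset,
          (∏ _i ∈ B, r) * ∏ _i ∈ (C2plus_finite m N).toFinset \ B, (1-r) := by
        apply Finset.sum_congr rfl
        intro B hB
        rw [Finset.prod_const, Finset.prod_const,
          Finset.card_sdiff_of_subset (Finset.mem_powerset.mp hB)]
        rfl
    _ = ∏ p ∈ (C2plus_finite m N).toFinset, (r + (1-r)) :=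
        (Finset.prod_add (fun _ : OPlaq m => r) (fun _ => 1-r)
          (C2plus_finite m N).toFinset).symm
    _ = 1 := h1

lemma finsum_subsets (m N : ℕ) (g : Set (OPlaq m) → ℝ) :
    ∑ᶠ A ∈ {A : Set (OPlaq m) | A ⊆ C2plus m N}, g A
      = ∑ B ∈ (C2plus_finite m N).toFinset.powerset, g ↑B := by
  classical
  have himg : {A : Set (OPlaq m) | A ⊆ C2plus m N}
      = (fun B : Finset (OPlaq m) => (↑B : Set (OPlaq m))) ''
          (↑(C2plus_finite m N).toFinset.powerset : Set (Finset (OPlaq m))) := by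
    ext A
    simp only [Set.mem_setOf_eq, Set.mem_image, Finset.coe_powerset, Set.mem_preimage,
      Set.mem_powerset_iff, Finset.mem_coe, Finset.mem_powerset]
    constructor
    · intro hA
      have hAfin : A.Finite := (C2plus_finite m N).subset hA
      refine ⟨hAfin.toFinset, ?_, hAfin.coe_toFinset⟩
      rw [hAfin.coe_toFinset]
      rw [Set.Finite.coe_toFinset]
      exact hA
    · rintro ⟨B, hB, rfl⟩
      rw [← Set.Finite.coe_toFinset (C2plus_finite m N)]
      exact hB
  rw [himg, finsum_mem_image (Finset.coe_injective.injOn), finsum_mem_coe_finset]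

lemma plaqset_zero (m N : ℕ) :
    PlaqSet m N (0 : OEdge m → ℤ) = {A : Set (OPlaq m) | A ⊆ C2plus m N} := by
  ext P
  constructor
  · intro hP; exact hP.1
  · intro hP
    refine ⟨hP, ∅, Set.empty_subset _, ?_⟩
    intro e _
    have h : {p ∈ (∅ : Set (OPlaq m)) | e ∈ p.bdry ∨ OEdge.neg e ∈ p.bdry} = ∅ := by
      ext p; simp
    rw [h]
    simp [Nat.card_coe_set_eq, Set.ncard_empty]

lemma tanh_nonneg' {β : ℝ} (hβ : 0 ≤ β) : 0 ≤ Real.tanh (2*β) := by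
  rw [Real.tanh_eq_sinh_div_cosh]
  exact div_nonneg (Real.sinh_nonneg_iff.mpr (by linarith)) (Real.cosh_pos _).le

lemma tanh_le_one' (x : ℝ) : Real.tanh x ≤ 1 := by
  rw [Real.tanh_eq_sinh_div_cosh, div_le_one (Real.cosh_pos x), Real.sinh_eq, Real.cosh_eq]
  have := Real.exp_pos (-x)
  linarith

lemma tanh_rel (β : ℝ) :
    (1 - Real.tanh (2*β)) * (1 - Real.exp (-4*β))
      = 2 * (Real.tanh (2*β) * (1 - (1 - Real.exp (-4*β)))) := by
  have hm2 : Real.exp (-(2*β)) = (Real.exp (2*β))⁻¹ := Real.exp_neg _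
  have hu : Real.exp (-4*β) = (Real.exp (2*β))⁻¹ * (Real.exp (2*β))⁻¹ := by
    rw [← hm2, ← Real.exp_add]; congr 1; ring
  have hpos : 0 < Real.exp (2*β) := Real.exp_pos _
  have hne : Real.exp (2*β) ≠ 0 := ne_of_gt hpos
  have hcosh : Real.exp (2*β) + (Real.exp (2*β))⁻¹ ≠ 0 := by positivity
  rw [Real.tanh_eq_sinh_div_cosh, Real.sinh_eq, Real.cosh_eq, hm2, hu]
  field_simp
  ring

/-- **Stochastic domination for the random cluster model** (Proposition 10):
`Ψ_{tanh 2β} ≼ φ⁰_{B_N,1-e^{-4β}} ≼ Ψ_{1-e^{-4β}}`, expressed via expectations of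
functions on subsets of `C_2(B_N)^+` that are nondecreasing for set inclusion. -/
theorem rcm_stoch_dom (m N : ℕ) (hm : 3 ≤ m) (hN : 1 ≤ N) (β : ℝ) (hβ : 0 ≤ β)
    (f : Set (OPlaq m) → ℝ)
    (hf : ∀ A B : Set (OPlaq m), A ⊆ B → B ⊆ C2plus m N → f A ≤ f B) :
    ((∑ᶠ A ∈ {A : Set (OPlaq m) | A ⊆ C2plus m N},
        bernoulli m N (Real.tanh (2 * β)) A * f A)
      ≤ ∑ᶠ P ∈ {A : Set (OPlaq m) | A ⊆ C2plus m N},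
          rcmProb m N (1 - Real.exp (-4 * β)) (0 : OEdge m → ℤ) P * f P)
    ∧ ((∑ᶠ P ∈ {A : Set (OPlaq m) | A ⊆ C2plus m N},
          rcmProb m N (1 - Real.exp (-4 * β)) (0 : OEdge m → ℤ) P * f P)
      ≤ ∑ᶠ A ∈ {A : Set (OPlaq m) | A ⊆ C2plus m N},
          bernoulli m N (1 - Real.exp (-4 * β)) A * f A) := by
  classical
  set q : ℝ := 1 - Real.exp (-4 * β) with hqdef
  set q1 : ℝ := Real.tanh (2 * β) with hq1def
  have hexp0 : 0 < Real.exp (-4 * β) := Real.exp_pos _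
  have hexp1 : Real.exp (-4 * β) ≤ 1 := Real.exp_le_one_iff.mpr (by linarith)
  have hq0 : 0 ≤ q := by rw [hqdef]; linarith
  have hq1 : q ≤ 1 := by rw [hqdef]; linarith
  have hq10 : 0 ≤ q1 := tanh_nonneg' hβ
  have hq11 : q1 ≤ 1 := tanh_le_one' _
  have hrel : (1 - q1) * q = 2 * (q1 * (1 - q)) := by rw [hqdef, hq1def]; exact tanh_rel β
  have hWnn : ∀ B : Finset (OPlaq m), 0 ≤ rcmWeight m N q ↑B :=
    fun B => rcmWeight_nonneg m N hq0 hq1 _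
  have hBW1nn : ∀ B, 0 ≤ BW m N q1 B := fun B => BW_nonneg m N hq10 hq11 B
  have hBWnn : ∀ B, 0 ≤ BW m N q B := fun B => BW_nonneg m N hq0 hq1 B
  obtain ⟨D, hDdef⟩ : ∃ D : ℝ,
      D = ∑ B ∈ (C2plus_finite m N).toFinset.powerset, rcmWeight m N q ↑B := ⟨_, rfl⟩
  have hD : 0 < D := by
    rw [hDdef]
    have hemp : (∅ : Finset (OPlaq m)) ∈ (C2plus_finite m N).toFinset.powerset :=
      Finset.empty_mem_powerset _
    have hW : 0 < rcmWeight m N q ↑(∅ : Finset (OPlaq m)) := by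
      rw [rcmWeight_coe m N q ∅ (Finset.empty_subset _)]
      have hN0 : (0:ℝ) < (N0 m N ↑(∅ : Finset (OPlaq m)) : ℝ) := by
        exact_mod_cast N0_pos m N _
      have h1q : (0:ℝ) < 1 - q := by rw [hqdef]; simpa using hexp0
      simp only [Finset.card_empty, pow_zero, mul_one, Nat.sub_zero]
      exact mul_pos hN0 (pow_pos h1q _)
    exact lt_of_lt_of_le hW (Finset.single_le_sum (fun B _ => hWnn B) hemp)
  have hplaq : PlaqSet m N (0 : OEdge m → ℤ) = {A : Set (OPlaq m) | A ⊆ C2plus m N} :=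
    plaqset_zero m N
  have hdenom : (∑ᶠ P' ∈ PlaqSet m N (0 : OEdge m → ℤ), rcmWeight m N q P') = D := by
    rw [hplaq, finsum_subsets m N (rcmWeight m N q), hDdef]
  have hsubC2 : ∀ B ∈ (C2plus_finite m N).toFinset.powerset,
      (↑B : Set (OPlaq m)) ⊆ C2plus m N := by
    intro B hB
    rw [← Set.Finite.coe_toFinset (C2plus_finite m N)]
    exact Finset.coe_subset.mpr (Finset.mem_powerset.mp hB)
  have hprob : ∀ B ∈ (C2plus_finite m N).toFinset.powerset,
      rcmProb m N q (0 : OEdge m → ℤ) ↑B = rcmWeight m N q ↑B / D := by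
    intro B hB
    unfold rcmProb
    rw [hdenom, if_pos (by rw [hplaq]; exact hsubC2 B hB)]
  -- rewrite the three finsums as finset sums
  rw [finsum_subsets m N (fun A => bernoulli m N q1 A * f A),
    finsum_subsets m N (fun A => rcmProb m N q (0 : OEdge m → ℤ) A * f A),
    finsum_subsets m N (fun A => bernoulli m N q A * f A)]
  have hsum_b1 : ∑ B ∈ (C2plus_finite m N).toFinset.powerset, bernoulli m N q1 ↑B * f ↑B
      = ∑ B ∈ (C2plus_finite m N).toFinset.powerset, BW m N q1 B * f ↑B :=
    Finset.sum_congr rfl (fun B hB => by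
      rw [bern_coe m N q1 B (Finset.mem_powerset.mp hB)])
  have hsum_bq : ∑ B ∈ (C2plus_finite m N).toFinset.powerset, bernoulli m N q ↑B * f ↑B
      = ∑ B ∈ (C2plus_finite m N).toFinset.powerset, BW m N q B * f ↑B :=
    Finset.sum_congr rfl (fun B hB => by
      rw [bern_coe m N q B (Finset.mem_powerset.mp hB)])
  have hsum_rc : ∑ B ∈ (C2plus_finite m N).toFinset.powerset,
        rcmProb m N q (0 : OEdge m → ℤ) ↑B * f ↑B
      = ∑ B ∈ (C2plus_finite m N).toFinset.powerset, (rcmWeight m N q ↑B * f ↑B) / D :=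
    Finset.sum_congr rfl (fun B hB => by rw [hprob B hB]; ring)
  rw [hsum_b1, hsum_bq, hsum_rc, ← Finset.sum_div]
  -- monotone nonnegative function
  set c : ℝ := f (∅ : Set (OPlaq m)) with hcdef
  have hfF : ∀ w : Finset (OPlaq m) → ℝ,
      ∑ B ∈ (C2plus_finite m N).toFinset.powerset, w B * (f ↑B - c)
      = (∑ B ∈ (C2plus_finite m N).toFinset.powerset, w B * f ↑B)
        - c * ∑ B ∈ (C2plus_finite m N).toFinset.powerset, w B := by
    intro w
    rw [Finset.mul_sum, ← Finset.sum_sub_distrib]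
    exact Finset.sum_congr rfl (fun B _ => by ring)
  have hFnn : ∀ B ∈ (C2plus_finite m N).toFinset.powerset, 0 ≤ f ↑B - c := by
    intro B hB
    have := hf ∅ ↑B (Set.empty_subset _) (hsubC2 B hB)
    rw [hcdef]; linarith
  have hFmono : ∀ A B : Finset (OPlaq m), B ∈ (C2plus_finite m N).toFinset.powerset →
      A ⊆ B → f ↑A - c ≤ f ↑B - c := by
    intro A B hB hAB
    have := hf ↑A ↑B (Finset.coe_subset.mpr hAB) (hsubC2 B hB)
    linarith
  have hsum1 : ∑ B ∈ (C2plus_finite m N).toFinset.powerset, BW m N q1 B = 1 := sum_BW m N q1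
  have hsumq : ∑ B ∈ (C2plus_finite m N).toFinset.powerset, BW m N q B = 1 := sum_BW m N q
  have e1 : ∑ B ∈ (C2plus_finite m N).toFinset.powerset, BW m N q1 B * (f ↑B - c)
      = (∑ B ∈ (C2plus_finite m N).toFinset.powerset, BW m N q1 B * f ↑B) - c := by
    rw [hfF, hsum1, mul_one]
  have e2 : ∑ B ∈ (C2plus_finite m N).toFinset.powerset, rcmWeight m N q ↑B * (f ↑B - c)
      = (∑ B ∈ (C2plus_finite m N).toFinset.powerset, rcmWeight m N q ↑B * f ↑B)
        - c * D := by
    rw [hfF, ← hDdef]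
  have e3 : ∑ B ∈ (C2plus_finite m N).toFinset.powerset, BW m N q B * (f ↑B - c)
      = (∑ B ∈ (C2plus_finite m N).toFinset.powerset, BW m N q B * f ↑B) - c := by
    rw [hfF, hsumq, mul_one]
  constructor
  · -- lower bound
    have had1 := ad_thm (C2plus_finite m N).toFinset
      (fun A => rcmWeight m N q ↑A)
      (fun B => BW m N q1 B * (f ↑B - c))
      (fun A => rcmWeight m N q ↑A * (f ↑A - c))
      (fun B => BW m N q1 B)
      (fun A _ => hWnn A)
      (fun A hA => mul_nonneg (hBW1nn A) (hFnn A hA))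
      (fun A hA => mul_nonneg (hWnn A) (hFnn A hA))
      (fun A _ => hBW1nn A)
      (by
        intro A hA B hB
        have hA' := Finset.mem_powerset.mp hA
        have hB' := Finset.mem_powerset.mp hB
        have hU : A ∪ B ∈ (C2plus_finite m N).toFinset.powerset :=
          Finset.mem_powerset.mpr (Finset.union_subset hA' hB')
        have h1 := holley_low m N hq0 hq1 hq10 hq11 hrel A B hA' hB'
        have h2 : f ↑B - c ≤ f ↑(A ∪ B) - c :=
          hFmono B (A ∪ B) hU Finset.subset_union_right
        calc rcmWeight m N q ↑A * (BW m N q1 B * (f ↑B - c))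
            = (rcmWeight m N q ↑A * BW m N q1 B) * (f ↑B - c) := by ring
          _ ≤ (rcmWeight m N q ↑(A ∪ B) * BW m N q1 (A ∩ B)) * (f ↑(A ∪ B) - c) :=
              mul_le_mul h1 h2 (hFnn B hB) (mul_nonneg (hWnn _) (hBW1nn _))
          _ = (rcmWeight m N q ↑(A ∪ B) * (f ↑(A ∪ B) - c)) * BW m N q1 (A ∩ B) := by ring)
    try simp only [] at had1
    rw [e1, e2, hsum1, ← hDdef, mul_one] at had1
    rw [le_div_iff₀ hD]
    nlinarith [had1]
  · -- upper bound
    have had2 := ad_thm (C2plus_finite m N).toFinset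
      (fun B => BW m N q B)
      (fun B => rcmWeight m N q ↑B * (f ↑B - c))
      (fun B => BW m N q B * (f ↑B - c))
      (fun B => rcmWeight m N q ↑B)
      (fun A _ => hBWnn A)
      (fun A hA => mul_nonneg (hWnn A) (hFnn A hA))
      (fun A hA => mul_nonneg (hBWnn A) (hFnn A hA))
      (fun A _ => hWnn A)
      (by
        intro A hA B hB
        have hA' := Finset.mem_powerset.mp hA
        have hB' := Finset.mem_powerset.mp hB
        have hU : A ∪ B ∈ (C2plus_finite m N).toFinset.powerset :=
          Finset.mem_powerset.mpr (Finset.union_subset hA' hB')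
        have h1 := holley_up m N hq0 hq1 A B hA' hB'
        have h2 : f ↑B - c ≤ f ↑(A ∪ B) - c :=
          hFmono B (A ∪ B) hU Finset.subset_union_right
        calc BW m N q A * (rcmWeight m N q ↑B * (f ↑B - c))
            = (BW m N q A * rcmWeight m N q ↑B) * (f ↑B - c) := by ring
          _ ≤ (BW m N q (A ∪ B) * rcmWeight m N q ↑(A ∩ B)) * (f ↑(A ∪ B) - c) :=
              mul_le_mul h1 h2 (hFnn B hB) (mul_nonneg (hBWnn _) (hWnn _))
          _ = (BW m N q (A ∪ B) * (f ↑(A ∪ B) - c)) * rcmWeight m N q ↑(A ∩ B) := by ring)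
    try simp only [] at had2
    rw [e2, e3, hsumq, ← hDdef, one_mul] at had2
    rw [div_le_iff₀ hD]
    nlinarith [had2]

end LGT
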